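/- The scalar sequence (‖z^k‖₁), where (z^k) is generated by the BP-MAP algorithm, converges to r̄, the optimal value of the basis pursuit problem; in fact ‖z^k‖₁ = r_k for every k. -/

import Mathlib

open Filter Topology

/-- The ℓ¹-norm on ℝⁿ. -/
noncomputable def norm1 {n : ℕ} (x : EuclideanSpace ℝ (Fin n)) : ℝ := ∑ i, |x i|

lemma norm1_nonneg {n : ℕ} (v : EuclideanSpace ℝ (Fin n)) : 0 ≤ norm1 v :=
  Finset.sum_nonneg fun _ _ => abs_nonneg _

lemma norm1_add_le {n : ℕ} (a b : EuclideanSpace ℝ (Fin n)) :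
    norm1 (a + b) ≤ norm1 a + norm1 b := by
  simp only [norm1, ← Finset.sum_add_distrib]
  exact Finset.sum_le_sum fun i _ => by
    simpa using abs_add_le (a i) (b i)

lemma norm1_smul {n : ℕ} (c : ℝ) (v : EuclideanSpace ℝ (Fin n)) :
    norm1 (c • v) = |c| * norm1 v := by
  simp [norm1, abs_mul, Finset.mul_sum]

lemma norm1_neg {n : ℕ} (v : EuclideanSpace ℝ (Fin n)) : norm1 (-v) = norm1 v := by
  simp [norm1]

lemma norm_le_norm1 {n : ℕ} (v : EuclideanSpace ℝ (Fin n)) : ‖v‖ ≤ norm1 v := by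
  rw [EuclideanSpace.norm_eq]
  have h1 : ∑ i, ‖v i‖ ^ 2 ≤ (∑ i, |v i|) ^ 2 := by
    simpa [Real.norm_eq_abs] using
      Finset.sum_sq_le_sq_sum_of_nonneg (s := Finset.univ)
        (f := fun i => |v i|) (fun i _ => abs_nonneg _)
  calc Real.sqrt (∑ i, ‖v i‖ ^ 2) ≤ Real.sqrt ((∑ i, |v i|) ^ 2) := Real.sqrt_le_sqrt h1
    _ = norm1 v := Real.sqrt_sq (norm1_nonneg v)

lemma norm1_le_sqrt_mul_norm {n : ℕ} (v : EuclideanSpace ℝ (Fin n)) :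
    norm1 v ≤ Real.sqrt n * ‖v‖ := by
  have h1 : (∑ i, |v i|) ^ 2 ≤ (n : ℝ) * ∑ i, |v i| ^ 2 := by
    simpa using sq_sum_le_card_mul_sum_sq (s := Finset.univ) (f := fun i => |v i|)
  have h2 : (∑ i : Fin n, |v i| ^ 2) = ‖v‖ ^ 2 := by
    rw [EuclideanSpace.norm_eq, Real.sq_sqrt (Finset.sum_nonneg fun i _ => by positivity)]
    simp [Real.norm_eq_abs]
  calc norm1 v = Real.sqrt ((∑ i, |v i|) ^ 2) := (Real.sqrt_sq (norm1_nonneg v)).symm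
    _ ≤ Real.sqrt ((n : ℝ) * ‖v‖ ^ 2) := Real.sqrt_le_sqrt (by rw [← h2]; exact h1)
    _ = Real.sqrt n * ‖v‖ := by
        rw [Real.sqrt_mul (Nat.cast_nonneg n), Real.sqrt_sq (norm_nonneg v)]

lemma norm1_sub_le {n : ℕ} (a b : EuclideanSpace ℝ (Fin n)) :
    norm1 a - norm1 b ≤ norm1 (a - b) := by
  have := norm1_add_le (a - b) b
  simp only [sub_add_cancel] at this
  linarith

/-- ‖z^k‖₁ = r_k for every k, and (‖z^k‖₁) converges to r̄. -/
theorem bpmap_norm1_z_tendsto {n m : ℕ} (hn : 1 ≤ n)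
    (A : Matrix (Fin m) (Fin n) ℝ) (b : Fin m → ℝ)
    (M : Set (EuclideanSpace ℝ (Fin n)))
    (hM : M = {x : EuclideanSpace ℝ (Fin n) | A.mulVec (WithLp.ofLp x) = b})
    (hMne : M.Nonempty)
    (rbar : ℝ) (hrbar : rbar = sInf (norm1 '' M))
    (r : ℕ → ℝ) (z x : ℕ → EuclideanSpace ℝ (Fin n))
    (hr0 : r 0 = 0) (hz0 : z 0 = 0)
    (hxM : ∀ k, x k ∈ M)
    (hzB : ∀ k, norm1 (z k) ≤ r k)
    (hbap : ∀ k, ∀ y ∈ M, ∀ w : EuclideanSpace ℝ (Fin n),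
      norm1 w ≤ r k → dist (z k) (x k) ≤ dist w y)
    (hrrec : ∀ k, r (k + 1) = r k + dist (z k) (x k)) :
    (∀ k, norm1 (z k) = r k) ∧ Tendsto (fun k => norm1 (z k)) atTop (𝓝 rbar) := by
  have hrlow : ∀ y ∈ M, rbar ≤ norm1 y := by
    intro y hy
    rw [hrbar]
    exact csInf_le ⟨0, by rintro t ⟨u, _, rfl⟩; exact norm1_nonneg u⟩ ⟨y, hy, rfl⟩
  have hrbar0 : 0 ≤ rbar := by
    rw [hrbar]
    exact Real.sInf_nonneg (by rintro t ⟨u, _, rfl⟩; exact norm1_nonneg u)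
  -- Step 1 : 0 ≤ r k ≤ rbar
  have key : ∀ k, 0 ≤ r k ∧ r k ≤ rbar := by
    intro k
    induction k with
    | zero => exact ⟨le_of_eq hr0.symm, hr0 ▸ hrbar0⟩
    | succ k ih =>
      refine ⟨by rw [hrrec]; exact add_nonneg ih.1 dist_nonneg, ?_⟩
      rw [hrrec]
      have hd : dist (z k) (x k) ≤ rbar - r k := by
        apply le_of_forall_pos_le_add
        intro ε hε
        obtain ⟨t, ht, hty⟩ := Real.lt_sInf_add_pos (hMne.image norm1) hε
        obtain ⟨y, hyM, rfl⟩ := ht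
        have hylt : norm1 y < rbar + ε := by rw [hrbar]; exact hty
        have hry : r k ≤ norm1 y := ih.2.trans (hrlow y hyM)
        by_cases hy0 : norm1 y = 0
        · have hrk0 : r k = 0 := le_antisymm (hy0 ▸ hry) ih.1
          have := hbap k y hyM y (by rw [hy0, hrk0])
          simp only [dist_self] at this
          linarith [ih.2]
        · have hypos : 0 < norm1 y := lt_of_le_of_ne (norm1_nonneg y) (Ne.symm hy0)
          set c := r k / norm1 y with hc
          have hc0 : 0 ≤ c := div_nonneg ih.1 hypos.le
          have hc1 : c ≤ 1 := div_le_one_of_le₀ hry (norm1_nonneg y)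
          have hcy : c * norm1 y = r k := by rw [hc, div_mul_cancel₀ _ hy0]
          have hw : norm1 (c • y) ≤ r k := by
            rw [norm1_smul, abs_of_nonneg hc0, hcy]
          have hbp := hbap k y hyM (c • y) hw
          have hdist : dist (c • y) y = (1 - c) * ‖y‖ := by
            rw [dist_eq_norm]
            have h : c • y - y = -((1 - c) • y) := by
              rw [sub_smul, one_smul, neg_sub]
            rw [h, norm_neg, norm_smul, Real.norm_eq_abs, abs_of_nonneg (by linarith)]
          have hny : ‖y‖ ≤ norm1 y := norm_le_norm1 y
          have : (1 - c) * ‖y‖ ≤ (1 - c) * norm1 y :=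
            mul_le_mul_of_nonneg_left hny (by linarith)
          nlinarith [hbp]
      linarith
  -- Step 2 : norm1 (z k) = r k
  have heq : ∀ k, norm1 (z k) = r k := by
    intro k
    refine le_antisymm (hzB k) ?_
    by_cases hd : dist (z k) (x k) = 0
    · have hz : z k = x k := by rwa [dist_eq_zero] at hd
      calc r k ≤ rbar := (key k).2
        _ ≤ norm1 (x k) := hrlow _ (hxM k)
        _ = norm1 (z k) := by rw [hz]
    · by_contra hlt
      push_neg at hlt
      have hdpos : 0 < dist (z k) (x k) := lt_of_le_of_ne dist_nonneg (Ne.symm hd)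
      set δ := r k - norm1 (z k) with hδ
      have hδpos : 0 < δ := by simp only [hδ]; linarith
      set L := norm1 (x k - z k) with hL
      have hLpos : 0 < L := by
        calc (0:ℝ) < dist (z k) (x k) := hdpos
          _ = ‖x k - z k‖ := by rw [dist_comm, dist_eq_norm]
          _ ≤ L := norm_le_norm1 _
      set t := min 1 (δ / L) with htdef
      have ht0 : 0 < t := lt_min one_pos (div_pos hδpos hLpos)
      have ht1 : t ≤ 1 := min_le_left _ _
      have htL : t * L ≤ δ := by
        calc t * L ≤ (δ / L) * L :=
              mul_le_mul_of_nonneg_right (min_le_right _ _) hLpos.le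
          _ = δ := div_mul_cancel₀ _ hLpos.ne'
      set w := z k + t • (x k - z k) with hwdef
      have hw1 : norm1 w ≤ r k := by
        calc norm1 w ≤ norm1 (z k) + norm1 (t • (x k - z k)) := norm1_add_le _ _
          _ = norm1 (z k) + t * L := by rw [norm1_smul, abs_of_pos ht0]
          _ ≤ norm1 (z k) + δ := by linarith
          _ = r k := by simp only [hδ]; ring
      have hbp := hbap k (x k) (hxM k) w hw1
      have hwx : dist w (x k) = (1 - t) * dist (z k) (x k) := by
        rw [dist_eq_norm, dist_eq_norm]
        have h : w - x k = (1 - t) • (z k - x k) := by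
          rw [hwdef]
          module
        rw [h, norm_smul, Real.norm_eq_abs, abs_of_nonneg (by linarith)]
      rw [hwx] at hbp
      nlinarith
  -- Step 3 : geometric convergence
  set s := Real.sqrt n with hs
  clear_value s
  have hs1 : 1 ≤ s := by
    rw [hs, show (1:ℝ) = Real.sqrt 1 by rw [Real.sqrt_one]]
    exact Real.sqrt_le_sqrt (by exact_mod_cast hn)
  have hspos : 0 < s := lt_of_lt_of_le one_pos hs1
  have hlower : ∀ k, (rbar - r k) / s ≤ dist (z k) (x k) := by
    intro k
    have h1 : norm1 (x k - z k) ≤ s * dist (z k) (x k) := by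
      rw [dist_comm, dist_eq_norm, hs]
      exact norm1_le_sqrt_mul_norm _
    have h2 : norm1 (x k) - norm1 (z k) ≤ norm1 (x k - z k) := norm1_sub_le _ _
    have h3 : rbar ≤ norm1 (x k) := hrlow _ (hxM k)
    have h4 : norm1 (z k) = r k := heq k
    rw [div_le_iff₀ hspos]
    nlinarith
  set q := 1 - 1 / s with hq
  clear_value q
  have hq0 : 0 ≤ q := by
    have h : 1 / s ≤ 1 := by rw [div_le_one hspos]; exact hs1
    simp only [hq]; linarith
  have hq1 : q < 1 := by
    have h : 0 < 1 / s := by positivity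
    simp only [hq]; linarith
  have hgeo : ∀ k, rbar - r k ≤ q ^ k * rbar := by
    intro k
    induction k with
    | zero => simp [hr0]
    | succ k ih =>
      have h1 := hlower k
      have hstep : rbar - r (k + 1) ≤ q * (rbar - r k) := by
        rw [hrrec]
        have hqe : q * (rbar - r k) = (rbar - r k) - (rbar - r k) / s := by
          rw [hq]
          field_simp
        nlinarith [h1, hqe]
      calc rbar - r (k + 1) ≤ q * (rbar - r k) := hstep
        _ ≤ q * (q ^ k * rbar) := mul_le_mul_of_nonneg_left ih hq0
        _ = q ^ (k + 1) * rbar := by ring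
  have hub : ∀ k, 0 ≤ rbar - r k := fun k => by linarith [(key k).2]
  have htend0 : Tendsto (fun k => rbar - r k) atTop (𝓝 0) := by
    apply squeeze_zero hub hgeo
    simpa using (tendsto_pow_atTop_nhds_zero_of_lt_one hq0 hq1).mul_const rbar
  have htend : Tendsto r atTop (𝓝 rbar) := by
    have h : Tendsto (fun k => rbar - (rbar - r k)) atTop (𝓝 (rbar - 0)) :=
      Tendsto.sub tendsto_const_nhds htend0
    simpa using h
  refine ⟨heq, ?_⟩
  have hfun : (fun k => norm1 (z k)) = r := funext heq
  rw [hfun]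
  exact htend
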